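/- Let X be a spiny symmetric set and x ∈ Xₙ. Then x is nondegenerate if and only if the Bousfield–Segal image 𝓑ₙ(x) = (ε₀₁*x, ..., ε₀ₙ*x) consists of n distinct elements of X₁, none of which is an identity (i.e., none is in the image of the degeneracy X₀ → X₁). -/

import Mathlib

open CategoryTheory Opposite

/-- The skeleton of the category of finite nonempty sets: objects are natural
numbers `n`, standing for `[n] = {0, …, n}`, morphisms are all functions. -/
def Ups : Type := ℕ

/-- The natural number underlying an object of `Ups`. -/
def Ups.toNat : Ups → ℕ := fun n => n

/-- The object `[n]` of `Ups`. -/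
def Ups.of : ℕ → Ups := fun n => n

instance : Category Ups where
  Hom n m := Fin (n.toNat + 1) → Fin (m.toNat + 1)
  id _ := _root_.id
  comp f g := g ∘ f

/-- A symmetric set is a presheaf on `Ups`. -/
abbrev SymmSet := Upsᵒᵖ ⥤ Type

/-- The map `ε_{ij} : [1] → [n]` sending `0, 1` to `i, j`. -/
def eps (n : ℕ) (i j : Fin (n + 1)) : Ups.of 1 ⟶ Ups.of n :=
  fun k => if k = 0 then i else j

/-- The set of `n`-simplices of a symmetric set. -/
abbrev simp (X : SymmSet) (n : ℕ) : Type := X.obj (op (Ups.of n))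

/-- The Bousfield–Segal map `𝓑ₙ : Xₙ → X₁ⁿ`, `x ↦ (ε₀₁*x, …, ε₀ₙ*x)`. -/
def BS (X : SymmSet) (n : ℕ) (x : simp X n) : Fin n → simp X 1 :=
  fun k => X.map (eps n 0 k.succ).op x

/-- The Segal map `𝓔ₙ : Xₙ → X₁ⁿ`, `x ↦ (ε₀₁*x, ε₁₂*x, …, ε₍ₙ₋₁₎ₙ*x)`. -/
def ES (X : SymmSet) (n : ℕ) (x : simp X n) : Fin n → simp X 1 :=
  fun k => X.map (eps n k.castSucc k.succ).op x

/-- The canonical map `μ_X` to matrices, `x ↦ (ε_{ij}* x)_{ij}`. -/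
def muMat (X : SymmSet) (n : ℕ) (x : simp X n) :
    Fin (n + 1) → Fin (n + 1) → simp X 1 :=
  fun i j => X.map (eps n i j).op x

/-- A symmetric set is spiny if all Bousfield–Segal maps are injective. -/
def Spiny (X : SymmSet) : Prop := ∀ n, Function.Injective (BS X n)
/-- The matrix symmetric set `Mat(S)`: `n`-simplices are functions `[n]×[n] → S`. -/
def MatS (S : Type) : SymmSet where
  obj k := Fin (k.unop.toNat + 1) → Fin (k.unop.toNat + 1) → S
  map f := TypeCat.ofHom (fun M => fun a b => M (f.unop a) (f.unop b))
  map_id := by intros; rfl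
  map_comp := by intros; rfl

/-- An `n`-simplex is degenerate if it is `ρ* y` for a noninvertible surjection
`ρ : [n] ↠ [m]` and an `m`-simplex `y`. -/
def Degen (X : SymmSet) (n : ℕ) (x : simp X n) : Prop :=
  ∃ (m : ℕ) (ρ : Ups.of n ⟶ Ups.of m), Function.Surjective ρ ∧
    ¬ Function.Bijective ρ ∧ ∃ y : simp X m, x = X.map ρ.op y

/-- The `d`-skeleton of a symmetric set, as a symmetric subset. -/
def skel (X : SymmSet) (d : ℕ) : SymmSet where
  obj k := {x : X.obj k // ∃ (i : ℕ) (_ : i ≤ d) (α : k.unop ⟶ Ups.of i)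
      (y : simp X i), x = X.map α.op y}
  map f := TypeCat.ofHom (fun x => ⟨X.map f x.1, by
    obtain ⟨i, hi, α, y, hy⟩ := x.2
    refine ⟨i, hi, f.unop ≫ α, y, ?_⟩
    rw [hy, ← FunctorToTypes.map_comp_apply]
    rfl⟩)
  map_id := by
    intro k; refine ConcreteCategory.hom_ext _ _ fun x => ?_
    exact Subtype.ext (by simp)
  map_comp := by
    intro k k' k'' f g; refine ConcreteCategory.hom_ext _ _ fun x => ?_
    exact Subtype.ext (by simp)

/-- A symmetric set is `d`-skeletal when all simplices above dimension `d`
are degenerate. -/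
def SkeletalLE (X : SymmSet) (d : ℕ) : Prop :=
  ∀ n, d < n → ∀ x : simp X n, Degen X n x

/-- `X` has dimension `d` when `d` is the least integer such that `X` is
`d`-skeletal. -/
def HasDim (X : SymmSet) (d : ℕ) : Prop :=
  IsLeast {m | SkeletalLE X m} d

/-- A symmetric set is reduced when it has exactly one `0`-simplex. -/
def Reduced (X : SymmSet) : Prop :=
  Nonempty (simp X 0) ∧ Subsingleton (simp X 0)

/-- A partial group is a reduced spiny symmetric set. -/
def IsPartialGroup (X : SymmSet) : Prop := Reduced X ∧ Spiny X

/-- A partial group is trivial when it has no nonidentity elements. -/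
def TrivialPG (X : SymmSet) : Prop := Subsingleton (simp X 1)

/-- The order of a partial group: the number of its elements (edges). -/
noncomputable def orderPG (X : SymmSet) : ℕ := Nat.card (simp X 1)

/-- An edge is an identity if it is in the image of the degeneracy `X₀ → X₁`. -/
def isIdent (X : SymmSet) (e : simp X 1) : Prop :=
  ∃ v : simp X 0, e = X.map (Quiver.Hom.op
    ((fun _ => 0 : Fin 2 → Fin 1) : Ups.of 1 ⟶ Ups.of 0)) v

/-- The source vertex of an edge. -/
def srcE (X : SymmSet) (e : simp X 1) : simp X 0 :=
  X.map (Quiver.Hom.op ((fun _ => 0 : Fin 1 → Fin 2) : Ups.of 0 ⟶ Ups.of 1)) e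

/-- `X` has (higher Segal) degree at most `k`: for each starry word `w` of
length `n+1 ≥ k+1`, if the last `k+1` faces `d_{n+1-k} w, …, d_{n+1} w` of `w`
are Bousfield–Segal images of simplices, then so is `w`. -/
def HasDegLE (X : SymmSet) (k : ℕ) : Prop :=
  ∀ n, k ≤ n → ∀ w : Fin (n + 1) → simp X 1,
    (∀ a b, srcE X (w a) = srcE X (w b)) →
    (∀ i : Fin (n + 1), n ≤ (i : ℕ) + k →
      (fun j : Fin n => w (i.succAbove j)) ∈ Set.range (BS X n)) →
    w ∈ Set.range (BS X (n + 1))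

/-- `X` has degree `d`: `d` is the least `k ≥ 1` with `HasDegLE X k`. -/
def DegreeIs (X : SymmSet) (d : ℕ) : Prop :=
  IsLeast {k | 1 ≤ k ∧ HasDegLE X k} d

/-- `W`, with structure maps `i, j`, is a coproduct of `Y` and `Z` in the
category of partial groups. -/
def IsPGCoproduct (W Y Z : SymmSet) (i : Y ⟶ W) (j : Z ⟶ W) : Prop :=
  ∀ V : SymmSet, IsPartialGroup V → ∀ (f : Y ⟶ V) (g : Z ⟶ V),
    ∃! h : W ⟶ V, i ≫ h = f ∧ j ≫ h = g

/-- The nerve of a group `G`, as a symmetric set: an `n`-simplex is a matrix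
`(g_{ij})` of elements of `G` satisfying the cocycle condition. -/
def grpNerve (G : Type) [Group G] : SymmSet where
  obj k := {M : Fin (k.unop.toNat + 1) → Fin (k.unop.toNat + 1) → G //
      ∀ i j l, M i j * M j l = M i l}
  map f := TypeCat.ofHom (fun M => ⟨fun a b => M.1 (f.unop a) (f.unop b),
    fun i j l => M.2 (f.unop i) (f.unop j) (f.unop l)⟩)
  map_id := by intro k; refine ConcreteCategory.hom_ext _ _ fun M => ?_; exact Subtype.ext rfl
  map_comp := by intros; refine ConcreteCategory.hom_ext _ _ fun M => ?_; exact Subtype.ext rfl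

/-
Both sides say that the row `j ↦ ε_{0j}* x` of the matrix `μ_X(x)` is injective: its entry at
`0` is the identity at the first vertex of `x`, and an edge `ε_{0k}* x` is an identity exactly
when it equals `ε_{00}* x`, because the source of an identity determines it. If `x = ρ* y` with
`ρ a = ρ b`, `a ≠ b`, the row agrees at `a` and `b`. Conversely, if `ε_{0a}* x = ε_{0b}* x` with
`b ≠ 0`, the map `[n] → [n]` sending `b` to `a` and fixing everything else does not change the
Bousfield–Segal image of `x`, so by spininess it fixes `x`; as it misses `b`, it factors through
`[n-1]` by a surjection, and `x` is degenerate.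
-/

def Ups.hom {n m : ℕ} (f : Fin (n + 1) → Fin (m + 1)) : Ups.of n ⟶ Ups.of m := f

def constMap (n : ℕ) (i : Fin (n + 1)) : Ups.of 0 ⟶ Ups.of n := fun _ => i

def toPoint : Ups.of 1 ⟶ Ups.of 0 := fun _ => 0

lemma eps_comp {n m : ℕ} (i j : Fin (n + 1)) (ρ : Fin (n + 1) → Fin (m + 1)) :
    eps n i j ≫ Ups.hom ρ = eps m (ρ i) (ρ j) := by
  funext a
  show ρ (if a = 0 then i else j) = if a = 0 then ρ i else ρ j
  split_ifs <;> rfl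

lemma eps_self (n : ℕ) (i : Fin (n + 1)) : eps n i i = toPoint ≫ constMap n i := by
  funext a
  show (if a = 0 then i else i) = i
  split_ifs <;> rfl

lemma constMap_comp_toPoint : constMap 1 0 ≫ toPoint = 𝟙 (Ups.of 0) :=
  funext fun a => (Fin.fin_one_eq_zero a).symm

section

variable (X : SymmSet)

lemma degen_iff_exists_not_injective {n : ℕ} (x : simp X n) :
    Degen X n x ↔ ∃ (m : ℕ) (ρ : Fin (n + 1) → Fin (m + 1)), Function.Surjective ρ ∧
      ¬ Function.Injective ρ ∧ ∃ y : simp X m, x = X.map (Ups.hom ρ).op y :=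
  ⟨fun ⟨m, ρ, hs, hb, y, hy⟩ => ⟨m, ρ, hs, fun hi => hb ⟨hi, hs⟩, y, hy⟩,
    fun ⟨m, ρ, hs, hi, y, hy⟩ => ⟨m, ρ, hs, fun hb => hi hb.1, y, hy⟩⟩

lemma muMat_map {n m : ℕ} (ρ : Fin (n + 1) → Fin (m + 1)) (y : simp X m) (i j : Fin (n + 1)) :
    muMat X n (X.map (Ups.hom ρ).op y) i j = muMat X m y (ρ i) (ρ j) := by
  unfold muMat
  rw [← Functor.map_comp_apply, ← op_comp, eps_comp]

lemma muMat_self (n : ℕ) (x : simp X n) (i : Fin (n + 1)) :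
    muMat X n x i i = X.map toPoint.op (X.map (constMap n i).op x) := by
  rw [muMat, eps_self, op_comp, Functor.map_comp_apply]

lemma srcE_muMat (n : ℕ) (x : simp X n) (i j : Fin (n + 1)) :
    srcE X (muMat X n x i j) = X.map (constMap n i).op x := by
  show X.map (constMap 1 0).op (X.map (eps n i j).op x) = _
  rw [← Functor.map_comp_apply, ← op_comp]
  rfl

lemma srcE_map_toPoint (v : simp X 0) : srcE X (X.map toPoint.op v) = v := by
  show X.map (constMap 1 0).op (X.map toPoint.op v) = v
  rw [← Functor.map_comp_apply, ← op_comp, constMap_comp_toPoint, op_id, Functor.map_id_apply]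

lemma isIdent_muMat_iff (n : ℕ) (x : simp X n) (i j : Fin (n + 1)) :
    isIdent X (muMat X n x i j) ↔ muMat X n x i j = muMat X n x i i := by
  constructor
  · rintro ⟨v, hv⟩
    have hv : muMat X n x i j = X.map toPoint.op v := hv
    have hv_src : v = X.map (constMap n i).op x := by
      rw [← srcE_map_toPoint X v, ← hv, srcE_muMat]
    rw [muMat_self, ← hv_src, hv]
  · exact fun h => ⟨_, h.trans (muMat_self X n x i)⟩

lemma muMat_zero_eq_cons (n : ℕ) (x : simp X n) :
    muMat X n x 0 = Fin.cons (muMat X n x 0 0) (BS X n x) := by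
  funext i
  cases i using Fin.cases <;> rfl

lemma not_injective_muMat_of_degen {n : ℕ} {x : simp X n} (hx : Degen X n x) (i : Fin (n + 1)) :
    ¬ Function.Injective (muMat X n x i) := by
  obtain ⟨m, ρ, -, hρ, y, rfl⟩ := (degen_iff_exists_not_injective X x).mp hx
  obtain ⟨a, b, hab, hne⟩ := Function.not_injective_iff.mp hρ
  exact fun h => hne (h (by rw [muMat_map, muMat_map, hab]))

lemma degen_of_map_update_eq_self {m : ℕ} {x : simp X (m + 1)} {t r : Fin (m + 2)}
    (hrt : r ≠ t) (hx : X.map (Ups.hom (Function.update id t r)).op x = x) :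
    Degen X (m + 1) x := by
  have h_miss (a : Fin (m + 2)) : Function.update id t r a ≠ t := by
    rcases eq_or_ne a t with rfl | h
    · rwa [Function.update_self]
    · rwa [Function.update_of_ne h]
  choose ρ hρ using fun a => Fin.exists_succAbove_eq (h_miss a)
  have h_fact : Ups.hom ρ ≫ Ups.hom t.succAbove = Ups.hom (Function.update id t r) := funext hρ
  refine (degen_iff_exists_not_injective X x).mpr
    ⟨m, ρ, fun c => ⟨t.succAbove c, ?_⟩, fun hi => ?_, X.map (Ups.hom t.succAbove).op x, ?_⟩
  · apply Fin.succAbove_right_injective (p := t)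
    exact (hρ _).trans (Function.update_of_ne (Fin.succAbove_ne t c) _ _)
  · have := Fin.le_of_injective ρ hi
    omega
  · nth_rw 1 [← hx, ← h_fact, op_comp, Functor.map_comp_apply]

variable {X}

lemma map_eq_self_of_muMat_zero_comp (hX : Spiny X) {n : ℕ} {x : simp X n}
    (τ : Fin (n + 1) → Fin (n + 1)) (hτ : τ 0 = 0) (hrow : muMat X n x 0 ∘ τ = muMat X n x 0) :
    X.map (Ups.hom τ).op x = x := by
  apply hX n
  funext k
  show muMat X n (X.map (Ups.hom τ).op x) 0 k.succ = muMat X n x 0 k.succ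
  rw [muMat_map, hτ]
  exact congrFun hrow k.succ

lemma degen_of_not_injective_muMat (hX : Spiny X) {n : ℕ} {x : simp X n}
    (hx : ¬ Function.Injective (muMat X n x 0)) : Degen X n x := by
  obtain ⟨a, b, hab, hne⟩ := Function.not_injective_iff.mp hx
  wlog hb : b ≠ 0 generalizing a b
  · exact this b a hab.symm hne.symm (not_not.mp hb ▸ hne)
  obtain ⟨m, rfl⟩ : ∃ m, n = m + 1 := ⟨n - 1, by have := Fin.pos_iff_ne_zero.mpr hb; omega⟩
  refine degen_of_map_update_eq_self X hne
    (map_eq_self_of_muMat_zero_comp hX _ (Function.update_of_ne hb.symm _ _) ?_)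
  funext c
  rcases eq_or_ne c b with rfl | hc
  · simp only [Function.comp_apply, Function.update_self, hab]
  · simp only [Function.comp_apply, Function.update_of_ne hc, id]

lemma not_degen_iff_injective_muMat (hX : Spiny X) (n : ℕ) (x : simp X n) :
    ¬ Degen X n x ↔ Function.Injective (muMat X n x 0) :=
  ⟨not_imp_comm.mp (degen_of_not_injective_muMat hX),
    fun h hx => not_injective_muMat_of_degen X hx 0 h⟩

end

/-- In a spiny symmetric set, an `n`-simplex is nondegenerate if and only if its
Bousfield–Segal image `(ε₀₁*x, …, ε₀ₙ*x)` consists of `n` distinct elements of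
`X₁`, none of which is an identity. -/
theorem nondegenerate_iff_bousfieldSegal_distinct_nonidentity
    (X : SymmSet) (hX : Spiny X) (n : ℕ) (x : simp X n) :
    ¬ Degen X n x ↔
      (Function.Injective (fun k : Fin n => BS X n x k) ∧
        ∀ k : Fin n, ¬ isIdent X (BS X n x k)) := by
  have h_ident (k : Fin n) : isIdent X (BS X n x k) ↔ BS X n x k = muMat X n x 0 0 :=
    isIdent_muMat_iff X n x 0 k.succ
  rw [not_degen_iff_injective_muMat hX, muMat_zero_eq_cons, Fin.cons_injective_iff,
    and_comm]
  simp only [Set.mem_range, not_exists, h_ident]
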